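/- arXiv:2212.05142 — 8 statements merged into one kernel-verified Lean document; each statement's English description precedes it below -/
import Mathlib

section
/- For every n ≥ 3, the directed n-cycle (vertices v_1, …, v_n with arcs v_i → v_{i+1} indices mod n) is (2,3)-cordial: there exists a labeling f : V → {0,1} with ||f⁻¹(0)| − |f⁻¹(1)|| ≤ 1 such that the induced arc labeling g(u,v) = f(v) − f(u) satisfies ||g⁻¹(i)| − |g⁻¹(j)|| ≤ 1 for all i, j ∈ {−1,0,1}. -/
/-!
Label the vertices along the cycle periodically by `1, 1, 0, 1, 0, 0`. Each period carries three
0s and three 1s, and its six arcs (counting the one into the next period) carry each of the labels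
`-1, 0, 1` twice. On a cycle with `6 k + r + 1` vertices every count is therefore `3 k` resp. `2 k`
plus the contribution of the `r + 1` remaining vertices and the closing arc, and for each `r < 6`
one offset of the pattern keeps that contribution balanced, which is a finite check.
-/

open Finset

/-- A (0,1)-vertex labeling is friendly if the counts of 0s and 1s differ by at most 1. -/
def vertexFriendly {V : Type*} [Fintype V] (f : V → ℤ) : Prop :=
  |((univ.filter (fun v => f v = 0)).card : ℤ) - ((univ.filter (fun v => f v = 1)).card : ℤ)| ≤ 1

/-- Number of arcs of `A` receiving induced label `i` under `g (u,v) = f v - f u`. -/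
def arcCount {V : Type*} [DecidableEq V] (A : Finset (V × V)) (f : V → ℤ) (i : ℤ) : ℕ :=
  (A.filter (fun p => f p.2 - f p.1 = i)).card

/-- The induced arc labeling is friendly: counts of labels -1, 0, 1 pairwise differ by ≤ 1. -/
def arcFriendly {V : Type*} [DecidableEq V] (A : Finset (V × V)) (f : V → ℤ) : Prop :=
  ∀ i ∈ ({-1, 0, 1} : Set ℤ), ∀ j ∈ ({-1, 0, 1} : Set ℤ),
    |(arcCount A f i : ℤ) - (arcCount A f j : ℤ)| ≤ 1

/-- A digraph (given by its arc set) is (2,3)-cordial. -/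
def cordial23 {V : Type*} [Fintype V] [DecidableEq V] (A : Finset (V × V)) : Prop :=
  ∃ f : V → ℤ, (∀ v, f v = 0 ∨ f v = 1) ∧ vertexFriendly f ∧ arcFriendly A f

/-- The arcs of the directed n-cycle on vertices Fin n: i → i+1 (mod n). -/
def cycleArcs (n : ℕ) : Finset (Fin n × Fin n) :=
  univ.filter (fun p => p.2.val = (p.1.val + 1) % n)

open Nat Function

theorem Nat.count_mul_add_of_periodic {p : ℕ → Prop} [DecidablePred p] {c : ℕ}
    (hp : Periodic p c) (k r : ℕ) : count p (c * k + r) = k * count p c + count p r := by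
  induction k with
  | zero => simp
  | succ k ih =>
    have hshift : (fun j => p (c + j)) = p := funext fun j => by rw [add_comm, hp]
    rw [show c * (k + 1) + r = c + (c * k + r) by ring, count_add]
    simp only [hshift, ih]
    ring

theorem card_filter_fin_eq_count (p : ℕ → Prop) [DecidablePred p] (n : ℕ) :
    #{i : Fin n | p i} = count p n := by
  rw [count_eq_card_filter_range, ← Nat.Iio_eq_range, ← Fin.map_valEmbedding_univ, filter_map,
    card_map]
  rfl

theorem vertexFriendly_iff {V : Type*} [Fintype V] {f : V → ℤ} (hf : ∀ v, f v = 0 ∨ f v = 1) :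
    vertexFriendly f ↔ |(Fintype.card V : ℤ) - 2 * #{v | f v = 1}| ≤ 1 := by
  have hzero : #{v | f v = 0} = #{v | ¬f v = 1} :=
    congrArg card <| filter_congr fun v _ => by rcases hf v with h | h <;> simp [h]
  have hsum := card_filter_add_card_filter_not (s := univ) (fun v => f v = 1)
  rw [vertexFriendly, hzero, ← Finset.card_univ, ← hsum]
  push_cast
  ring_nf

def cycleArcCount (g : ℕ → ℤ) (m : ℕ) (l : ℤ) : ℕ :=
  count (fun i => g (i + 1) - g i = l) m + if g 0 - g m = l then 1 else 0

theorem arcCount_cycleArcs (g : ℕ → ℤ) (m : ℕ) (l : ℤ) :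
    arcCount (cycleArcs (m + 1)) (fun i => g i) l = cycleArcCount g m l := by
  have hbij : arcCount (cycleArcs (m + 1)) (fun i => g i) l =
      #{i : Fin (m + 1) | g ((i + 1) % (m + 1)) - g i = l} := by
    refine card_nbij' Prod.fst (fun i => (i, ⟨(i + 1) % (m + 1), Nat.mod_lt _ m.succ_pos⟩))
      ?_ ?_ ?_ ?_
    · rintro ⟨i, j⟩ h
      simp only [cycleArcs, filter_filter, coe_filter, mem_univ, true_and] at h
      simpa [← h.1] using h.2
    · intro i h
      simp_all [cycleArcs]
    · rintro ⟨i, j⟩ h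
      simp_all [cycleArcs, Fin.ext_iff]
    · intro i _
      rfl
  have hpath : count (fun i => g ((i + 1) % (m + 1)) - g i = l) m =
      count (fun i => g (i + 1) - g i = l) m := by
    simp only [count_eq_card_filter_range]
    refine congrArg card (filter_congr fun i hi => ?_)
    rw [Nat.mod_eq_of_lt (by simpa using hi)]
  rw [hbij, card_filter_fin_eq_count (fun i => g ((i + 1) % (m + 1)) - g i = l), count_succ,
    hpath, Nat.mod_self, cycleArcCount]

theorem cycleArcCount_of_periodic {g : ℕ → ℤ} {c : ℕ} (hg : Periodic g c) (k r : ℕ) (l : ℤ) :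
    cycleArcCount g (c * k + r) l = k * count (fun i => g (i + 1) - g i = l) c +
      cycleArcCount g r l := by
  have hp : Periodic (fun i => g (i + 1) - g i = l) c := fun i => by
    simp only [add_right_comm i c 1, hg (i + 1), hg i]
  have hm : g (c * k + r) = g r := by simpa [add_comm, mul_comm] using hg.nat_mul k r
  rw [cycleArcCount, cycleArcCount, count_mul_add_of_periodic hp, hm, add_assoc]

def pattern (j : ℕ) : ℤ := if j % 6 = 0 ∨ j % 6 = 1 ∨ j % 6 = 3 then 1 else 0

theorem pattern_eq_zero_or_one (j : ℕ) : pattern j = 0 ∨ pattern j = 1 := by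
  unfold pattern
  split_ifs <;> simp

/-- The labeling of the cycle with `6 k + r + 1` vertices: `pattern` read from an offset chosen
so that the incomplete last period together with the closing arc stays balanced. -/
def shiftedPattern (r j : ℕ) : ℤ := pattern (j + if r = 1 then 1 else if r = 3 then 3 else 0)

theorem shiftedPattern_periodic (r : ℕ) : Periodic (shiftedPattern r) 6 := fun j => by
  simp only [shiftedPattern, pattern, add_right_comm j 6, Nat.add_mod_right]

theorem shiftedPattern_eq_zero_or_one (r j : ℕ) :
    shiftedPattern r j = 0 ∨ shiftedPattern r j = 1 :=
  pattern_eq_zero_or_one _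

theorem shiftedPattern_vertex_balanced : ∀ r < 6,
    count (shiftedPattern r · = 1) 6 = 3 ∧
      |(r + 1 : ℤ) - 2 * count (shiftedPattern r · = 1) (r + 1)| ≤ 1 := by
  decide

theorem shiftedPattern_arc_balanced : ∀ r < 6, ∀ i ∈ [-1, 0, 1],
    count (fun j => shiftedPattern r (j + 1) - shiftedPattern r j = i) 6 = 2 ∧
      ∀ i' ∈ [-1, 0, 1], |(cycleArcCount (shiftedPattern r) r i : ℤ) -
        cycleArcCount (shiftedPattern r) r i'| ≤ 1 := by
  decide

theorem vertexFriendly_shiftedPattern {k r : ℕ} (hr : r < 6) :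
    vertexFriendly fun i : Fin (6 * k + r + 1) => shiftedPattern r i := by
  obtain ⟨hperiod, hrest⟩ := shiftedPattern_vertex_balanced r hr
  rw [vertexFriendly_iff fun i : Fin _ => shiftedPattern_eq_zero_or_one r i, Fintype.card_fin,
    card_filter_fin_eq_count (shiftedPattern r · = 1), add_assoc,
    count_mul_add_of_periodic (fun j => by simp only [shiftedPattern_periodic r j]), hperiod]
  convert hrest using 2
  push_cast
  ring

theorem arcFriendly_shiftedPattern {k r : ℕ} (hr : r < 6) :
    arcFriendly (cycleArcs (6 * k + r + 1)) fun i => shiftedPattern r i := by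
  intro i hi i' hi'
  replace hi : i ∈ [-1, 0, 1] := by simpa using hi
  replace hi' : i' ∈ [-1, 0, 1] := by simpa using hi'
  obtain ⟨hperiod, hrest⟩ := shiftedPattern_arc_balanced r hr i hi
  rw [arcCount_cycleArcs, arcCount_cycleArcs,
    cycleArcCount_of_periodic (shiftedPattern_periodic r),
    cycleArcCount_of_periodic (shiftedPattern_periodic r), hperiod,
    (shiftedPattern_arc_balanced r hr i' hi').1]
  simpa using hrest i' hi'

theorem directedCycle_cordial_general (n : ℕ) : cordial23 (cycleArcs n) := by
  rcases n with _ | m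
  · exact ⟨0, by simp, by simp [vertexFriendly], by simp [arcFriendly, arcCount, cycleArcs]⟩
  obtain ⟨k, r, hr, rfl⟩ : ∃ k r, r < 6 ∧ m = 6 * k + r :=
    ⟨m / 6, m % 6, Nat.mod_lt _ (by norm_num), (Nat.div_add_mod m 6).symm⟩
  exact ⟨_, fun i => shiftedPattern_eq_zero_or_one r i, vertexFriendly_shiftedPattern hr,
    arcFriendly_shiftedPattern hr⟩

/-- Every directed n-cycle, n ≥ 3, is (2,3)-cordial. -/
theorem directedCycle_cordial (n : ℕ) (hn : 3 ≤ n) : cordial23 (cycleArcs n) :=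
  directedCycle_cordial_general n
end

section
/- For every n ≥ 1, the directed n-path (vertices v_1, …, v_n with arcs v_i → v_{i+1} for 1 ≤ i ≤ n−1, all oriented in the same direction) is (2,3)-cordial. -/
open Finset

/-- The arcs of the directed n-path on vertices Fin n: i → i+1. -/
def dirPathArcs (n : ℕ) : Finset (Fin n × Fin n) :=
  univ.filter (fun p => p.1.val + 1 = p.2.val)

/-!
Label the path periodically by `0, 1, 1, 0, 0, 1`. Among six consecutive vertices each vertex
label occurs three times, and the six arcs leaving them carry the labels `1, 0, -1, 0, 1, -1`,
each twice. Hence on any initial segment the counts differ exactly as on a segment shorter than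
the period, where they are checked directly.
-/

namespace Nat

variable {p q : ℕ → Prop} [DecidablePred p] [DecidablePred q] {k : ℕ}

theorem count_add_period (hp : Function.Periodic p k) (n : ℕ) :
    count p (k + n) = count p k + count p n := by
  have hp' : ∀ j, p (k + j) = p j := fun j => by rw [add_comm, hp]
  simp only [count_add, hp']

theorem count_mul_add_of_periodic_s4 (hp : Function.Periodic p k) (m r : ℕ) :
    count p (k * m + r) = m * count p k + count p r := by
  induction m with
  | zero => simp
  | succ m ih => rw [Nat.mul_succ, add_comm _ k, add_assoc, count_add_period hp, ih]; ring

theorem abs_count_sub_count_le_of_periodic (hk : 0 < k) (hp : Function.Periodic p k)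
    (hq : Function.Periodic q k) (hpq : count p k = count q k) {d : ℤ}
    (hd : ∀ r < k, |(count p r : ℤ) - count q r| ≤ d) (n : ℕ) :
    |(count p n : ℤ) - count q n| ≤ d := by
  rw [← Nat.div_add_mod n k, count_mul_add_of_periodic_s4 hp, count_mul_add_of_periodic_s4 hq, hpq]
  push_cast
  simpa using hd _ (mod_lt n hk)

end Nat

theorem card_filter_fin_val (n : ℕ) (q : ℕ → Prop) [DecidablePred q] :
    #{v : Fin n | q v} = Nat.count q n := by
  rw [Nat.count_eq_card_filter_range, card_filter, card_filter,
    Fin.sum_univ_eq_sum_range (fun k => if q k then 1 else 0) n]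

theorem arcCount_dirPathArcs (f : ℕ → ℤ) (n : ℕ) (j : ℤ) :
    arcCount (dirPathArcs n) (fun v => f v) j =
      Nat.count (fun i => f (i + 1) - f i = j) (n - 1) := by
  rw [Nat.count_eq_card_filter_range, arcCount, dirPathArcs, filter_filter]
  apply card_bij (fun p _ => p.1.val)
  · intro a ha
    simp only [mem_filter, mem_univ, true_and] at ha
    simp only [mem_filter, mem_range]
    exact ⟨by omega, by rw [ha.1]; exact ha.2⟩
  · intro a ha b hb hab
    simp only [mem_filter, mem_univ, true_and] at ha hb
    exact Prod.ext (Fin.ext hab) (Fin.ext (by omega))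
  · intro i hi
    simp only [mem_filter, mem_range] at hi
    exact ⟨(⟨i, by omega⟩, ⟨i + 1, by omega⟩), mem_filter.mpr ⟨mem_univ _, rfl, hi.2⟩, rfl⟩

def pathLabel (i : ℕ) : ℤ := if i % 6 = 0 ∨ i % 6 = 3 ∨ i % 6 = 4 then 0 else 1

theorem pathLabel_periodic : Function.Periodic pathLabel 6 := by
  intro i; simp [pathLabel]

theorem pathLabel_eq_zero_or_one (i : ℕ) : pathLabel i = 0 ∨ pathLabel i = 1 := by
  unfold pathLabel; split <;> simp

theorem pathLabel_step_periodic :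
    Function.Periodic (fun i => pathLabel (i + 1) - pathLabel i) 6 := by
  intro i; simp only [add_right_comm i 6 1, pathLabel_periodic (i + 1), pathLabel_periodic i]

theorem abs_count_pathLabel_sub_le_one (n : ℕ) :
    |(Nat.count (pathLabel · = 0) n : ℤ) - Nat.count (pathLabel · = 1) n| ≤ 1 :=
  Nat.abs_count_sub_count_le_of_periodic (k := 6) (by norm_num) (pathLabel_periodic.comp (· = 0))
    (pathLabel_periodic.comp (· = 1)) (by decide) (by decide) n

theorem abs_count_pathLabel_step_sub_le_one {i j : ℤ} (hi : i ∈ ({-1, 0, 1} : Set ℤ))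
    (hj : j ∈ ({-1, 0, 1} : Set ℤ)) (n : ℕ) :
    |(Nat.count (fun m => pathLabel (m + 1) - pathLabel m = i) n : ℤ) -
      Nat.count (fun m => pathLabel (m + 1) - pathLabel m = j) n| ≤ 1 := by
  simp only [Set.mem_insert_iff, Set.mem_singleton_iff] at hi hj
  refine Nat.abs_count_sub_count_le_of_periodic (by norm_num)
    (pathLabel_step_periodic.comp (· = i)) (pathLabel_step_periodic.comp (· = j)) ?_ ?_ n
  all_goals rcases hi with rfl | rfl | rfl <;> rcases hj with rfl | rfl | rfl <;> decide

theorem directedPath_cordial_general (n : ℕ) : cordial23 (dirPathArcs n) := by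
  refine ⟨fun v => pathLabel v, fun v => pathLabel_eq_zero_or_one v, ?_, ?_⟩
  · rw [vertexFriendly, card_filter_fin_val n (pathLabel · = 0),
      card_filter_fin_val n (pathLabel · = 1)]
    exact abs_count_pathLabel_sub_le_one n
  · intro i hi j hj
    rw [arcCount_dirPathArcs, arcCount_dirPathArcs]
    exact abs_count_pathLabel_step_sub_le_one hi hj (n - 1)

/-- Every directed n-path, n ≥ 1, is (2,3)-cordial. -/
theorem directedPath_cordial (n : ℕ) (hn : 1 ≤ n) : cordial23 (dirPathArcs n) :=
  directedPath_cordial_general n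
end

section
/- For every n ≥ 4, the out-star on n vertices (one central vertex v with an arc from v to each of the other n−1 vertices) is not (2,3)-cordial: for every labeling f : V → {0,1}, the induced arc labeling g(u,w) = f(w) − f(u) fails to be friendly on the arcs. -/
open Finset

/-- The arcs of the out-star on Fin n: center is vertex 0, arcs point to all other vertices. -/
def outStarArcs (n : ℕ) : Finset (Fin n × Fin n) :=
  univ.filter (fun p => p.1.val = 0 ∧ p.2.val ≠ 0)

lemma card_outStarArcs (n : ℕ) (hn : 0 < n) : (outStarArcs n).card = n - 1 := by
  have h : outStarArcs n
      = ({(⟨0, hn⟩ : Fin n)} : Finset (Fin n)) ×ˢ (univ.filter fun v : Fin n => v.val ≠ 0) := by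
    ext p
    simp only [outStarArcs, mem_filter, mem_univ, true_and, Finset.mem_product,
      mem_singleton, Fin.ext_iff]
  have h2 : (univ.filter fun v : Fin n => v.val ≠ 0) = univ.erase ⟨0, hn⟩ := by
    ext v; simp [Fin.ext_iff]
  rw [h, card_product, card_singleton, one_mul, h2,
    card_erase_of_mem (mem_univ _), card_univ, Fintype.card_fin]

/-- For n ≥ 4, the out-star on n vertices is not (2,3)-cordial: no (0,1)-labeling at all
induces a friendly arc labeling. -/
theorem outStar_not_cordial (n : ℕ) (hn : 4 ≤ n) :
    ∀ f : Fin n → ℤ, (∀ v, f v = 0 ∨ f v = 1) → ¬ arcFriendly (outStarArcs n) f := by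
  intro f hf hfr
  have hn0 : 0 < n := by omega
  set z : Fin n := ⟨0, hn0⟩ with hz
  set A := outStarArcs n with hAdef
  have hA : A.card = n - 1 := card_outStarArcs n hn0
  have hp1 : ∀ p ∈ A, f p.1 = f z := by
    intro p hp
    simp only [hAdef, outStarArcs, mem_filter] at hp
    congr 1
    exact Fin.ext hp.2.1
  have key : ∀ a b : ℤ, a ∈ ({-1, 0, 1} : Set ℤ) → b ∈ ({-1, 0, 1} : Set ℤ) → a ≠ b →
      (∀ p ∈ A, f p.2 - f p.1 = a ∨ f p.2 - f p.1 = b) → False := by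
    intro a b ha hb hab hlab
    -- the third label c occurs 0 times
    obtain ⟨c, hc, hca, hcb⟩ : ∃ c ∈ ({-1, 0, 1} : Set ℤ), c ≠ a ∧ c ≠ b := by
      simp only [Set.mem_insert_iff, Set.mem_singleton_iff] at ha hb ⊢
      rcases ha with rfl|rfl|rfl <;> rcases hb with rfl|rfl|rfl <;> simp_all
    have hcz : arcCount A f c = 0 := by
      unfold arcCount
      rw [Finset.card_eq_zero, Finset.filter_eq_empty_iff]
      intro p hp
      rcases hlab p hp with h|h <;> simp [h, Ne.symm hca, Ne.symm hcb]
    have hsum : arcCount A f a + arcCount A f b = A.card := by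
      have hfe : A.filter (fun p => f p.2 - f p.1 = b)
          = A.filter (fun p => ¬ (f p.2 - f p.1 = a)) := by
        apply filter_congr
        intro p hp
        rcases hlab p hp with h|h <;> simp [h, hab, Ne.symm hab]
      unfold arcCount
      rw [hfe]
      exact Finset.card_filter_add_card_filter_not _
    have h1 := hfr a ha c hc
    have h2 := hfr b hb c hc
    rw [abs_le] at h1 h2
    rw [hA] at hsum
    rw [hcz] at h1 h2
    push_cast at h1 h2
    omega
  rcases hf z with h0 | h0
  · refine key 0 1 (by simp) (by simp) (by omega) ?_
    intro p hp
    rw [hp1 p hp, h0]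
    rcases hf p.2 with h|h <;> simp [h]
  · refine key (-1) 0 (by simp) (by simp) (by omega) ?_
    intro p hp
    rw [hp1 p hp, h0]
    rcases hf p.2 with h|h <;> simp [h]
end

section
/- For every n ≥ 4, the in-star on n vertices (one central vertex v with an arc from each of the other n−1 vertices into v) is not (2,3)-cordial. -/
open Finset

/-- The arcs of the in-star on Fin n: center is vertex 0, arcs point from all other vertices into it. -/
def inStarArcs (n : ℕ) : Finset (Fin n × Fin n) :=
  univ.filter (fun p => p.2.val = 0 ∧ p.1.val ≠ 0)

/-! Every arc of the in-star ends at the centre `c`, so with binary labels its induced label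
`f c - f u` lies in `{f c - 1, f c}`, and one of the labels `±1` never occurs. Friendliness of
the arc labeling then allows at most one arc of each of the other two labels, i.e. at most two
arcs, while the in-star has `n - 1 ≥ 3` of them. -/

section BinaryLabeling

variable {V : Type*} [DecidableEq V] {A : Finset (V × V)} {f : V → ℤ}

theorem card_eq_sum_arcCount (hf : ∀ v, f v = 0 ∨ f v = 1) :
    (#A : ℤ) = arcCount A f (-1) + arcCount A f 0 + arcCount A f 1 := by
  have hlabel : Set.MapsTo (fun p : V × V => f p.2 - f p.1) A ({-1, 0, 1} : Finset ℤ) := by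
    intro p _
    rcases hf p.1 with h₁ | h₁ <;> rcases hf p.2 with h₂ | h₂ <;> simp [h₁, h₂]
  rw [card_eq_sum_card_fiberwise hlabel]
  simp [arcCount, add_assoc]

theorem card_le_two_of_arcFriendly (hf : ∀ v, f v = 0 ∨ f v = 1) (hA : arcFriendly A f)
    {i : ℤ} (hi : i ∈ ({-1, 0, 1} : Set ℤ)) (h0 : arcCount A f i = 0) : #A ≤ 2 := by
  have hbound : ∀ j ∈ ({-1, 0, 1} : Set ℤ), (arcCount A f j : ℤ) ≤ 1 := fun j hj => by
    simpa [h0] using (abs_le.mp (hA j hj i hi)).2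
  have hsum := card_eq_sum_arcCount (A := A) hf
  have hneg := hbound (-1) (by simp)
  have hzero := hbound 0 (by simp)
  have hpos := hbound 1 (by simp)
  rcases hi with rfl | rfl | rfl <;> omega

theorem arcCount_eq_zero_of_forall_snd_eq (hf : ∀ v, f v = 0 ∨ f v = 1) {c : V}
    (hc : ∀ p ∈ A, p.2 = c) : arcCount A f (1 - 2 * f c) = 0 := by
  rw [arcCount, card_eq_zero, filter_eq_empty_iff]
  intro p hp
  rw [hc p hp]
  rcases hf c with h₁ | h₁ <;> rcases hf p.1 with h₂ | h₂ <;> simp [h₁, h₂]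

end BinaryLabeling

theorem snd_eq_zero_of_mem_inStarArcs {k : ℕ} {p : Fin (k + 1) × Fin (k + 1)}
    (hp : p ∈ inStarArcs (k + 1)) : p.2 = 0 :=
  Fin.ext (mem_filter.mp hp).2.1

theorem card_inStarArcs (k : ℕ) : #(inStarArcs (k + 1)) = k := by
  have : inStarArcs (k + 1) = univ.erase 0 ×ˢ {0} := by
    ext ⟨u, w⟩
    simp only [inStarArcs, mem_filter, mem_univ, true_and, mem_product, mem_erase, mem_singleton,
      and_true, ne_eq, Fin.ext_iff, Fin.val_zero]
    tauto
  simp [this]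

/-- For n ≥ 4, the in-star on n vertices is not (2,3)-cordial. -/
theorem inStar_not_cordial (n : ℕ) (hn : 4 ≤ n) : ¬ cordial23 (inStarArcs n) := by
  obtain ⟨k, rfl⟩ : ∃ k, n = k + 1 := ⟨n - 1, by omega⟩
  rintro ⟨f, hf, -, hA⟩
  have hmissing := arcCount_eq_zero_of_forall_snd_eq hf fun _ => snd_eq_zero_of_mem_inStarArcs
  have hlabel : 1 - 2 * f 0 ∈ ({-1, 0, 1} : Set ℤ) := by
    rcases hf 0 with h | h <;> simp [h]
  have hcard := card_le_two_of_arcFriendly hf hA hlabel hmissing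
  rw [card_inStarArcs] at hcard
  omega
end

section
/- A star graph on n ≥ 1 vertices admits an orientation that is (2,3)-cordial if and only if n ≤ 11 and n ≠ 10. -/
open Finset

/-- An orientation of the star on Fin n with center vertex 0: for a pendant vertex with value
i ≠ 0, the edge is directed away from the center iff o i = true. -/
def starArcs (n : ℕ) (o : ℕ → Bool) : Finset (Fin n × Fin n) :=
  univ.filter (fun p =>
    (p.1.val = 0 ∧ p.2.val ≠ 0 ∧ o p.2.val = true) ∨
    (p.2.val = 0 ∧ p.1.val ≠ 0 ∧ o p.1.val = false))

def Pend (n : ℕ) : Finset (Fin n) := univ.filter (fun v => v.val ≠ 0)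

def psi {n : ℕ} (hn : 1 ≤ n) (o : ℕ → Bool) (v : Fin n) : Fin n × Fin n :=
  if o v.val then (⟨0, hn⟩, v) else (v, ⟨0, hn⟩)

lemma starArcs_eq {n : ℕ} (hn : 1 ≤ n) (o : ℕ → Bool) :
    starArcs n o = (Pend n).image (psi hn o) := by
  ext ⟨p1, p2⟩
  simp only [starArcs, Pend, psi, mem_image, mem_filter, mem_univ, true_and]
  constructor
  · rintro (⟨h1, h2, h3⟩ | ⟨h1, h2, h3⟩)
    · exact ⟨p2, h2, by rw [h3]; simp; exact Fin.ext h1.symm⟩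
    · exact ⟨p1, h2, by rw [h3]; simp; exact Fin.ext h1.symm⟩
  · rintro ⟨v, hv, hpsi⟩
    by_cases hov : o v.val
    · simp [hov] at hpsi
      left
      refine ⟨by rw [← hpsi.1], by rw [← hpsi.2]; exact ⟨hv, hov⟩⟩
    · simp [hov] at hpsi
      right
      refine ⟨by rw [← hpsi.2], by rw [← hpsi.1]; exact ⟨hv, by simp [hov]⟩⟩

lemma psi_injOn {n : ℕ} (hn : 1 ≤ n) (o : ℕ → Bool) :
    Set.InjOn (psi hn o) (Pend n) := by
  intro u hu v hv h
  simp only [Pend, coe_filter, Set.mem_setOf_eq, mem_univ, true_and] at hu hv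
  unfold psi at h
  by_cases hu' : o u.val <;> by_cases hv' : o v.val <;> simp [hu', hv', Prod.ext_iff] at h
  · exact h
  · exact absurd (congrArg Fin.val h.1.symm) (by simpa using hv)
  · exact absurd (congrArg Fin.val h.1) (by simpa using hu)
  · exact h

lemma arcCount_eq {n : ℕ} (hn : 1 ≤ n) (o : ℕ → Bool) (f : Fin n → ℤ) (i : ℤ) :
    arcCount (starArcs n o) f i =
      ((Pend n).filter (fun v =>
        (if o v.val then f v - f ⟨0, hn⟩ else f ⟨0, hn⟩ - f v) = i)).card := by
  rw [arcCount, starArcs_eq hn o, Finset.filter_image]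
  rw [Finset.card_image_of_injOn ((psi_injOn hn o).mono (by
    intro x hx; simp only [Finset.coe_filter, Set.mem_setOf_eq] at hx; exact hx.1))]
  congr 1
  apply filter_congr
  intro v hv
  unfold psi
  by_cases hov : o v.val <;> simp [hov]
section
variable {α : Type*}
lemma filter_three (s : Finset α) (p q r : α → Prop)
    [DecidablePred p] [DecidablePred q] [DecidablePred r]
    (h : ∀ a ∈ s, ((if p a then 1 else 0) + (if q a then 1 else 0) + (if r a then 1 else 0) : ℕ) = 1) :
    (s.filter p).card + (s.filter q).card + (s.filter r).card = s.card := by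
  rw [card_filter, card_filter, card_filter, ← Finset.sum_add_distrib, ← Finset.sum_add_distrib]
  rw [Finset.sum_congr rfl h, Finset.sum_const, smul_eq_mul, mul_one]

lemma filter_two (s : Finset α) (p q : α → Prop)
    [DecidablePred p] [DecidablePred q]
    (h : ∀ a ∈ s, ((if p a then 1 else 0) + (if q a then 1 else 0) : ℕ) = 1) :
    (s.filter p).card + (s.filter q).card = s.card := by
  rw [card_filter, card_filter, ← Finset.sum_add_distrib]
  rw [Finset.sum_congr rfl h, Finset.sum_const, smul_eq_mul, mul_one]
end

lemma pend_card {n : ℕ} (hn : 1 ≤ n) : (Pend n).card = n - 1 := by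
  have : Pend n = Finset.univ.erase ⟨0, hn⟩ := by
    ext v
    simp [Pend, Fin.ext_iff]
  rw [this, Finset.card_erase_of_mem (Finset.mem_univ _), Finset.card_univ, Fintype.card_fin]

lemma univ_eq {n : ℕ} (hn : 1 ≤ n) :
    (Finset.univ : Finset (Fin n)) = insert ⟨0, hn⟩ (Pend n) := by
  ext v
  simp only [Finset.mem_univ, Finset.mem_insert, Pend, Finset.mem_filter, true_iff, true_and]
  rcases Nat.eq_zero_or_pos v.val with h | h
  · exact Or.inl (Fin.ext h)
  · exact Or.inr (by omega)

lemma zero_not_pend {n : ℕ} (hn : 1 ≤ n) : (⟨0, hn⟩ : Fin n) ∉ Pend n := by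
  simp [Pend]

lemma count_univ {n : ℕ} (hn : 1 ≤ n) (p : Fin n → Prop) [DecidablePred p] :
    (Finset.univ.filter p).card
      = ((Pend n).filter p).card + (if p ⟨0, hn⟩ then 1 else 0) := by
  rw [univ_eq hn, Finset.filter_insert]
  by_cases hp : p ⟨0, hn⟩
  · simp only [hp, if_true]
    rw [Finset.card_insert_of_notMem (fun h => zero_not_pend hn (Finset.mem_filter.1 h).1)]
  · simp [hp]

lemma not_cordial {n : ℕ} (hn : 1 ≤ n) (hbig : n = 10 ∨ 12 ≤ n) (o : ℕ → Bool) :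
    ¬ cordial23 (starArcs n o) := by
  rintro ⟨f, hf, hvf, haf⟩
  have key : arcCount (starArcs n o) f 1 + arcCount (starArcs n o) f (-1)
      + arcCount (starArcs n o) f 0 = n - 1 := by
    rw [arcCount_eq hn, arcCount_eq hn, arcCount_eq hn, filter_three, pend_card hn]
    intro a _
    rcases hf a with h1 | h1 <;> rcases hf (⟨0, hn⟩ : Fin n) with h2 | h2 <;>
      by_cases hov : o a.val <;> norm_num [hov, h1, h2]
  have hs : arcCount (starArcs n o) f 0 = ((Pend n).filter (fun v => f v = f (⟨0, hn⟩ : Fin n))).card := by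
    rw [arcCount_eq hn]
    congr 1
    apply filter_congr
    intro v _
    by_cases hov : o v.val <;> simp only [hov, if_true, if_false] <;> omega
  have hp : ((Pend n).filter (fun v => f v = 0)).card
      + ((Pend n).filter (fun v => f v = 1)).card = n - 1 := by
    rw [filter_two, pend_card hn]
    intro a _
    rcases hf a with h1 | h1 <;> norm_num [h1]
  have hn0 := count_univ hn (fun v => f v = 0)
  have hn1 := count_univ hn (fun v => f v = 1)
  have harc1 := haf 1 (by norm_num) 0 (by norm_num)
  have harc2 := haf (-1) (by norm_num) 0 (by norm_num)
  unfold vertexFriendly at hvf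
  rw [abs_le] at hvf harc1 harc2
  rcases hf (⟨0, hn⟩ : Fin n) with h0 | h0
  · have heq : ((Pend n).filter (fun v => f v = f (⟨0, hn⟩ : Fin n))).card
        = ((Pend n).filter (fun v => f v = 0)).card := by
      congr 1
      apply filter_congr
      intro v _
      rw [h0]
    simp only [h0] at hn0 hn1
    norm_num at hn0 hn1
    rw [hs, heq] at key harc1 harc2
    omega
  · have heq : ((Pend n).filter (fun v => f v = f (⟨0, hn⟩ : Fin n))).card
        = ((Pend n).filter (fun v => f v = 1)).card := by
      congr 1
      apply filter_congr
      intro v _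
      rw [h0]
    simp only [h0] at hn0 hn1
    norm_num at hn0 hn1
    rw [hs, heq] at key harc1 harc2
    omega

lemma arcFriendly_of {V : Type*} [DecidableEq V] (A : Finset (V × V)) (f : V → ℤ)
    (h1 : |(arcCount A f (-1) : ℤ) - (arcCount A f 0 : ℤ)| ≤ 1)
    (h2 : |(arcCount A f (-1) : ℤ) - (arcCount A f 1 : ℤ)| ≤ 1)
    (h3 : |(arcCount A f 0 : ℤ) - (arcCount A f 1 : ℤ)| ≤ 1) :
    arcFriendly A f := by
  intro i hi j hj
  simp only [Set.mem_insert_iff, Set.mem_singleton_iff] at hi hj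
  rcases hi with rfl | rfl | rfl <;> rcases hj with rfl | rfl | rfl <;>
    first
      | (simp only [sub_self, abs_zero]; norm_num)
      | assumption
      | (rw [abs_sub_comm]; assumption)


/-- A star on n ≥ 1 vertices admits a (2,3)-cordial orientation iff n ≤ 11 and n ≠ 10. -/
theorem star_cordial_iff (n : ℕ) (hn : 1 ≤ n) :
    (∃ o : ℕ → Bool, cordial23 (starArcs n o)) ↔ (n ≤ 11 ∧ n ≠ 10) := by
  constructor
  · rintro ⟨o, hc⟩
    by_contra hcon
    rw [not_and_or, not_le, ne_eq, not_not] at hcon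
    exact not_cordial hn (by omega) o hc
  · rintro ⟨h1, h2⟩
    interval_cases n
    · exact ⟨fun i => decide (i ≤ 0), fun v => if v.val ≤ 0 then 0 else 1,
        fun v => by by_cases h : v.val ≤ 0 <;> simp [h],
        by unfold vertexFriendly; decide,
        arcFriendly_of _ _ (by unfold arcCount; decide) (by unfold arcCount; decide)
          (by unfold arcCount; decide)⟩
    · exact ⟨fun i => decide (i ≤ 1), fun v => if v.val ≤ 0 then 0 else 1,
        fun v => by by_cases h : v.val ≤ 0 <;> simp [h],
        by unfold vertexFriendly; decide,
        arcFriendly_of _ _ (by unfold arcCount; decide) (by unfold arcCount; decide)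
          (by unfold arcCount; decide)⟩
    · exact ⟨fun i => decide (i ≤ 1), fun v => if v.val ≤ 0 then 0 else 1,
        fun v => by by_cases h : v.val ≤ 0 <;> simp [h],
        by unfold vertexFriendly; decide,
        arcFriendly_of _ _ (by unfold arcCount; decide) (by unfold arcCount; decide)
          (by unfold arcCount; decide)⟩
    · exact ⟨fun i => decide (i ≤ 2), fun v => if v.val ≤ 1 then 0 else 1,
        fun v => by by_cases h : v.val ≤ 1 <;> simp [h],
        by unfold vertexFriendly; decide,
        arcFriendly_of _ _ (by unfold arcCount; decide) (by unfold arcCount; decide)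
          (by unfold arcCount; decide)⟩
    · exact ⟨fun i => decide (i ≤ 3), fun v => if v.val ≤ 1 then 0 else 1,
        fun v => by by_cases h : v.val ≤ 1 <;> simp [h],
        by unfold vertexFriendly; decide,
        arcFriendly_of _ _ (by unfold arcCount; decide) (by unfold arcCount; decide)
          (by unfold arcCount; decide)⟩
    · exact ⟨fun i => decide (i ≤ 4), fun v => if v.val ≤ 2 then 0 else 1,
        fun v => by by_cases h : v.val ≤ 2 <;> simp [h],
        by unfold vertexFriendly; decide,
        arcFriendly_of _ _ (by unfold arcCount; decide) (by unfold arcCount; decide)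
          (by unfold arcCount; decide)⟩
    · exact ⟨fun i => decide (i ≤ 4), fun v => if v.val ≤ 2 then 0 else 1,
        fun v => by by_cases h : v.val ≤ 2 <;> simp [h],
        by unfold vertexFriendly; decide,
        arcFriendly_of _ _ (by unfold arcCount; decide) (by unfold arcCount; decide)
          (by unfold arcCount; decide)⟩
    · exact ⟨fun i => decide (i ≤ 5), fun v => if v.val ≤ 3 then 0 else 1,
        fun v => by by_cases h : v.val ≤ 3 <;> simp [h],
        by unfold vertexFriendly; decide,
        arcFriendly_of _ _ (by unfold arcCount; decide) (by unfold arcCount; decide)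
          (by unfold arcCount; decide)⟩
    · exact ⟨fun i => decide (i ≤ 6), fun v => if v.val ≤ 3 then 0 else 1,
        fun v => by by_cases h : v.val ≤ 3 <;> simp [h],
        by unfold vertexFriendly; decide,
        arcFriendly_of _ _ (by unfold arcCount; decide) (by unfold arcCount; decide)
          (by unfold arcCount; decide)⟩
    · exact absurd rfl h2
    · exact ⟨fun i => decide (i ≤ 7), fun v => if v.val ≤ 4 then 0 else 1,
        fun v => by by_cases h : v.val ≤ 4 <;> simp [h],
        by unfold vertexFriendly; decide,
        arcFriendly_of _ _ (by unfold arcCount; decide) (by unfold arcCount; decide)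
          (by unfold arcCount; decide)⟩
end

section
/- For every even n ≥ 12, no orientation of the star on n vertices is (2,3)-cordial. More precisely, if n = 2k with k ≥ 6, then for any orientation and any friendly labeling f, the k−1 arcs labeled 0 together with the split of the remaining k arcs among labels 1 and −1 cannot yield a friendly arc labeling. -/
open Finset

/-!
A friendly labeling of `2k` vertices has exactly `k` vertices of each label. The `k - 1` pendants
sharing the centre's label give the arcs labelled `0`; the other `k` pendants give the arcs
labelled `±1`. Friendliness would force each of the counts of `1` and `-1` to be at least `k - 2`,
so `k ≥ 2 (k - 2)`, i.e. `k ≤ 4`.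
-/

lemma card_filter_eq_of_vertexFriendly {V : Type*} [Fintype V] {f : V → ℤ} {k : ℕ}
    (hf : ∀ v, f v = 0 ∨ f v = 1) (hfr : vertexFriendly f) (hV : Fintype.card V = 2 * k)
    {a : ℤ} (ha : a = 0 ∨ a = 1) : #{v | f v = a} = k := by
  have hone : #{v | f v = 1} = #{v | ¬f v = 0} := by
    congr 1
    exact filter_congr fun v _ => by rcases hf v with h | h <;> simp [h]
  have hsplit : #{v | f v = 0} + #{v | f v = 1} = 2 * k := by
    rw [hone, card_filter_add_card_filter_not, card_univ, hV]
  unfold vertexFriendly at hfr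
  rw [abs_le] at hfr
  rcases ha with rfl | rfl <;> omega

section Star

variable {n : ℕ} [NeZero n] (o : ℕ → Bool)

def starArc (v : Fin n) : Fin n × Fin n :=
  if o v then (0, v) else (v, 0)

lemma starArcs_eq_image : starArcs n o = (univ.erase 0).image (starArc o) := by
  ext ⟨u, w⟩
  simp only [starArcs, starArc, mem_filter, mem_univ, true_and, mem_image, mem_erase,
    and_true, ne_eq, Fin.val_eq_zero_iff]
  constructor
  · rintro (⟨hu, hw, ho⟩ | ⟨hw, hu, ho⟩)
    · exact ⟨w, hw, by simp [ho, hu]⟩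
    · exact ⟨u, hu, by simp [ho, hw]⟩
  · rintro ⟨v, hv, hvuw⟩
    cases ho : o v <;> simp_all

lemma starArc_injOn : Set.InjOn (starArc o) (univ.erase (0 : Fin n) : Set (Fin n)) := by
  intro v hv w hw hvw
  simp only [mem_coe, mem_erase, mem_univ, and_true] at hv hw
  unfold starArc at hvw
  split_ifs at hvw
  · exact (Prod.mk.inj hvw).2
  · exact absurd (Prod.mk.inj hvw).2 hv
  · exact absurd (Prod.mk.inj hvw).1 hv
  · exact (Prod.mk.inj hvw).1

lemma starArc_label (f : Fin n → ℤ) (v : Fin n) :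
    f (starArc o v).2 - f (starArc o v).1 = if o v then f v - f 0 else f 0 - f v := by
  unfold starArc
  split_ifs <;> rfl

lemma arcCount_starArcs (f : Fin n → ℤ) (i : ℤ) :
    arcCount (starArcs n o) f i =
      #{v ∈ univ.erase 0 | f (starArc o v).2 - f (starArc o v).1 = i} := by
  rw [arcCount, starArcs_eq_image, filter_image]
  exact card_image_of_injOn ((starArc_injOn o).mono (coe_subset.mpr (filter_subset _ _)))

lemma arcCount_starArcs_zero (f : Fin n → ℤ) :
    arcCount (starArcs n o) f 0 = #{v ∈ univ.erase 0 | f v = f 0} := by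
  rw [arcCount_starArcs]
  congr 1
  refine filter_congr fun v _ => ?_
  rw [starArc_label]
  split_ifs <;> omega

lemma arcCount_starArcs_one_add_neg_one {f : Fin n → ℤ} (hf : ∀ v, f v = 0 ∨ f v = 1) :
    arcCount (starArcs n o) f 1 + arcCount (starArcs n o) f (-1) =
      #{v ∈ univ.erase 0 | f v ≠ f 0} := by
  rw [arcCount_starArcs, arcCount_starArcs, ← card_union_of_disjoint, ← filter_or]
  · congr 1
    refine filter_congr fun v _ => ?_
    rw [starArc_label]
    rcases hf v with h | h <;> rcases hf 0 with h0 | h0 <;> split_ifs <;> simp [h, h0]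
  · exact disjoint_filter.mpr fun _ _ h1 h2 => by omega

end Star

/-- For even n = 2k ≥ 12, no orientation of the star on n vertices is (2,3)-cordial. -/
theorem star_even_large_not_cordial (k : ℕ) (hk : 6 ≤ k) :
    ∀ o : ℕ → Bool, ¬ cordial23 (starArcs (2 * k) o) := by
  rintro o ⟨f, hf, hfr, harc⟩
  have : NeZero (2 * k) := ⟨by omega⟩
  have hsame : #{v | f v = f 0} = k :=
    card_filter_eq_of_vertexFriendly hf hfr (Fintype.card_fin _) (hf 0)
  have hdiff : #{v | f v ≠ f 0} = k := by
    have := card_filter_add_card_filter_not (s := univ) (fun v : Fin (2 * k) => f v = f 0)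
    rw [card_univ, Fintype.card_fin, hsame] at this
    simp only [ne_eq]
    omega
  have h0 : arcCount (starArcs (2 * k) o) f 0 = k - 1 := by
    rw [arcCount_starArcs_zero, filter_erase, card_erase_of_mem (by simp), hsame]
  have h1 : arcCount (starArcs (2 * k) o) f 1 + arcCount (starArcs (2 * k) o) f (-1) = k := by
    rw [arcCount_starArcs_one_add_neg_one o hf, filter_erase,
      erase_eq_of_notMem (by simp), hdiff]
  have h01 := abs_le.mp (harc 0 (by simp) 1 (by simp))
  have h0m := abs_le.mp (harc 0 (by simp) (-1) (by simp))
  omega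
end

section
/- For every odd n ≥ 13, no orientation of the star on n vertices is (2,3)-cordial. -/
open Finset

/-- For odd n ≥ 13, no orientation of the star on n vertices is (2,3)-cordial. -/
theorem star_odd_large_not_cordial (n : ℕ) (hn : 13 ≤ n) (hodd : Odd n) :
    ∀ o : ℕ → Bool, ¬ cordial23 (starArcs n o) := by
  rintro o ⟨f, hf01, hvf, haf⟩
  have hnpos : 0 < n := by omega
  obtain ⟨k, hk⟩ : ∃ k, n = 2 * k + 1 := by
    obtain ⟨k, hk⟩ := hodd; exact ⟨k, by omega⟩
  set z : Fin n := ⟨0, hnpos⟩ with hzdef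
  set e : Fin n → Fin n × Fin n := fun i => if o i.val then (z, i) else (i, z) with hedef
  set P : Finset (Fin n) := univ.filter (fun i : Fin n => ¬ i.val = 0) with hPdef
  -- characterize starArcs as image
  have hA : starArcs n o = P.image e := by
    ext p
    simp only [starArcs, mem_filter, mem_univ, true_and, mem_image, hPdef, hedef]
    constructor
    · rintro (⟨h1, h2, h3⟩ | ⟨h1, h2, h3⟩)
      · refine ⟨p.2, h2, ?_⟩
        rw [h3]
        simp only [if_true]
        ext <;> simp [hzdef, h1.symm]
      · refine ⟨p.1, h2, ?_⟩
        rw [h3]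
        simp only [Bool.false_eq_true, if_false]
        ext <;> simp [hzdef, h1.symm]
    · rintro ⟨i, hi, rfl⟩
      by_cases ho : o i.val
      · left; simp [ho, hzdef, hi]
      · right; simp [ho, hzdef, hi]
  have heinj : Set.InjOn e P := by
    intro i hi j hj hij
    simp only [hPdef, mem_coe, mem_filter, mem_univ, true_and] at hi hj
    simp only [hedef] at hij
    split_ifs at hij <;> rw [Prod.mk.injEq] at hij
    · exact hij.2
    · exact absurd (congrArg Fin.val hij.2) hi
    · exact absurd (congrArg Fin.val hij.1) hi
    · exact hij.1
  -- arcCount via pendants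
  have harc : ∀ v : ℤ, arcCount (starArcs n o) f v =
      (P.filter (fun j => f (e j).2 - f (e j).1 = v)).card := by
    intro v
    rw [arcCount, hA, Finset.filter_image, Finset.card_image_of_injOn
      (heinj.mono (by intro x hx; exact mem_coe.mpr (mem_of_mem_filter x hx)))]
  -- pendant card
  have hPcard : P.card = n - 1 := by
    have h1 : (univ.filter (fun i : Fin n => i.val = 0)) = {z} := by
      ext i
      simp only [mem_filter, mem_univ, true_and, mem_singleton]
      constructor
      · intro h; exact Fin.ext (by simp [hzdef, h])
      · rintro rfl; simp [hzdef]
    have h2 := Finset.card_filter_add_card_filter_not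
      (s := (univ : Finset (Fin n))) (p := fun i : Fin n => i.val = 0)
    rw [Finset.card_univ, Fintype.card_fin, h1, card_singleton] at h2
    rw [hPdef]
    omega
  set S : Finset (Fin n) := P.filter (fun j => f j = f z) with hSdef
  set D : Finset (Fin n) := P.filter (fun j => ¬ f j = f z) with hDdef
  have hSD : S.card + D.card = n - 1 := by
    rw [hSdef, hDdef, Finset.card_filter_add_card_filter_not, hPcard]
  -- c0 = S.card
  have hc0 : arcCount (starArcs n o) f 0 = S.card := by
    rw [harc, hSdef]
    congr 1
    apply Finset.filter_congr
    intro j _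
    simp only [hedef]
    by_cases ho : o j.val <;> simp only [ho, if_true, Bool.false_eq_true, if_false] <;>
      constructor <;> intro h <;> omega
  -- c1 + c(-1) = D.card
  have hc1 : arcCount (starArcs n o) f 1 + arcCount (starArcs n o) f (-1) = D.card := by
    rw [harc, harc, hDdef]
    rw [← Finset.card_union_of_disjoint]
    · congr 1
      ext j
      simp only [mem_union, mem_filter, mem_univ, true_and, hedef]
      constructor
      · rintro (⟨hj, hd⟩ | ⟨hj, hd⟩) <;> refine ⟨hj, ?_⟩ <;>
          by_cases ho : o j.val <;>
          simp only [ho, if_true, Bool.false_eq_true, if_false] at hd <;> omega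
      · rintro ⟨hj, hd⟩
        have hd' : f j - f z = 1 ∨ f j - f z = -1 := by
          rcases hf01 j with h1 | h1 <;> rcases hf01 z with h2 | h2 <;> omega
        by_cases ho : o j.val <;>
          simp only [ho, if_true, Bool.false_eq_true, if_false] <;> rcases hd' with h | h
        · exact Or.inl ⟨hj, h⟩
        · exact Or.inr ⟨hj, h⟩
        · exact Or.inr ⟨hj, by omega⟩
        · exact Or.inl ⟨hj, by omega⟩
    · rw [Finset.disjoint_left]
      intro j h1 h2
      simp only [mem_filter] at h1 h2
      omega
  -- vertex counts
  set N0 : ℕ := (univ.filter (fun v : Fin n => f v = 0)).card with hN0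
  set N1 : ℕ := (univ.filter (fun v : Fin n => f v = 1)).card with hN1
  have hN : N0 + N1 = n := by
    have h2 := Finset.card_filter_add_card_filter_not
      (s := (univ : Finset (Fin n))) (p := fun v : Fin n => f v = 0)
    rw [Finset.card_univ, Fintype.card_fin] at h2
    have : (univ.filter (fun v : Fin n => ¬ f v = 0)) =
        (univ.filter (fun v : Fin n => f v = 1)) := by
      apply Finset.filter_congr
      intro v _
      rcases hf01 v with h | h <;> simp [h]
    rw [this] at h2
    omega
  -- T = vertices with label f z
  set T : Finset (Fin n) := univ.filter (fun j => f j = f z) with hTdef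
  have hTS : T.card = S.card + 1 := by
    have hzS : z ∉ S := by simp [hSdef, hPdef, hzdef]
    have : T = insert z S := by
      ext j
      simp only [hTdef, hSdef, hPdef, mem_filter, mem_univ, true_and, mem_insert,
        Finset.filter_filter]
      constructor
      · intro h
        by_cases hj : j.val = 0
        · left; exact Fin.ext (by simp [hzdef, hj])
        · right; exact ⟨hj, h⟩
      · rintro (rfl | ⟨_, h⟩)
        · rfl
        · exact h
    rw [this, Finset.card_insert_of_notMem hzS]
  have hT01 : T.card = N0 ∨ T.card = N1 := by
    rcases hf01 z with h | h
    · left; rw [hTdef, hN0]; congr 1; apply Finset.filter_congr; intro v _; rw [h]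
    · right; rw [hTdef, hN1]; congr 1; apply Finset.filter_congr; intro v _; rw [h]
  -- friendliness inequalities
  rw [vertexFriendly, abs_le] at hvf
  have h01 := haf 0 (by norm_num) 1 (by norm_num)
  have h0m := haf 0 (by norm_num) (-1) (by norm_num)
  rw [abs_le] at h01 h0m
  rw [hc0] at h01 h0m
  obtain ⟨h01a, h01b⟩ := h01
  obtain ⟨h0ma, h0mb⟩ := h0m
  have hN0' : (N0 : ℤ) = N0 := rfl
  omega
end

section
/- The orientation of the 4-path with arcs v_1 → v_2, v_2 → v_3, v_4 → v_3 is not (2,3)-cordial: for every friendly labeling f : {v_1,v_2,v_3,v_4} → {0,1}, the induced arc labeling fails to use each of the labels −1, 0, 1 exactly once. -/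
open Finset

/-- The orientation v₁ → v₂, v₂ → v₃, v₄ → v₃ of the 4-path is not (2,3)-cordial: no friendly
labeling induces each of the labels -1, 0, 1 exactly once. -/
theorem path4_orientation1_not_cordial :
    ∀ f : Fin 4 → ℤ, (∀ v, f v = 0 ∨ f v = 1) → vertexFriendly f →
      ¬ (arcCount ({((0 : Fin 4), (1 : Fin 4)), ((1 : Fin 4), (2 : Fin 4)),
            ((3 : Fin 4), (2 : Fin 4))} : Finset (Fin 4 × Fin 4)) f (-1) = 1 ∧
         arcCount ({((0 : Fin 4), (1 : Fin 4)), ((1 : Fin 4), (2 : Fin 4)),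
            ((3 : Fin 4), (2 : Fin 4))} : Finset (Fin 4 × Fin 4)) f 0 = 1 ∧
         arcCount ({((0 : Fin 4), (1 : Fin 4)), ((1 : Fin 4), (2 : Fin 4)),
            ((3 : Fin 4), (2 : Fin 4))} : Finset (Fin 4 × Fin 4)) f 1 = 1) := by
  intro f hf hv ⟨h1, h2, h3⟩
  have e0 := hf 0; have e1 := hf 1; have e2 := hf 2; have e3 := hf 3
  simp only [arcCount, Finset.filter_insert, Finset.filter_singleton] at h1 h2 h3
  rcases e0 with e0|e0 <;> rcases e1 with e1|e1 <;> rcases e2 with e2|e2 <;>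
    rcases e3 with e3|e3 <;> simp [e0, e1, e2, e3] at h1 h2 h3 <;>
    simp [vertexFriendly, show (Finset.univ : Finset (Fin 4)) = {0, 1, 2, 3} by decide,
      Finset.filter_insert, Finset.filter_singleton, e0, e1, e2, e3] at hv
end
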